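/- The inverse of the (p+1)-dimensional Hilbert matrix H with entries H_{ij} = 1/(i+j-1) has entries (H^{-1})_{ij} = (-1)^{i+j} (i+j-1) * C(p+i, p+1-j) * C(p+j, p+1-i) * C(i+j-2, i-1)^2, where C denotes the binomial coefficient. -/

import Mathlib

/-!
The Hilbert matrix is the Cauchy matrix `1 / (a i - b k)` with nodes `a i = i`, `b k = -(k + 1)`.
A Cauchy matrix is inverted by partial fractions: expanding `∏_{m ≠ j} (t - a m) / ∏_m (t - b m)`
over the poles `b k` (the barycentric Lagrange formula) and evaluating at `t = a i` gives `δ i j`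
up to an explicit factor. For the Hilbert nodes every product in the resulting formula is a
quotient of factorials, and the binomial coefficients of the statement repackage them.
-/

open Finset Polynomial Lagrange
open scoped Nat

namespace Lagrange

variable {F ι : Type*} [Field F] [DecidableEq ι] {s : Finset ι} {v : ι → F}

theorem eval_eq_eval_nodal_mul_sum_nodalWeight {f : F[X]} (hvs : Set.InjOn v s)
    (hf : f.degree < #s) {x : F} (hx : ∀ i ∈ s, x ≠ v i) :
    f.eval x = (nodal s v).eval x * ∑ i ∈ s, nodalWeight s v i * (x - v i)⁻¹ * f.eval (v i) := by
  conv_lhs => rw [eq_interpolate hvs hf]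
  exact eval_interpolate_not_at_node _ hx

end Lagrange

namespace Matrix

variable {K ι : Type*} [Field K] [Fintype ι] [DecidableEq ι]

def cauchy (a b : ι → K) : Matrix ι ι K :=
  of fun i k => (a i - b k)⁻¹

theorem inv_cauchy {a b : ι → K} (ha : a.Injective) (hb : b.Injective) (hab : ∀ i k, a i ≠ b k) :
    (cauchy a b)⁻¹ = of fun k j => (nodal univ a).eval (b k) * (nodal univ b).eval (a j) *
      nodalWeight univ a j * nodalWeight univ b k / (b k - a j) := by
  refine inv_eq_right_inv (ext fun i j => ?_)
  set E := nodal (univ.erase j) a with hE_def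
  have hE : ∀ k, (nodal univ a).eval (b k) / (b k - a j) = E.eval (b k) := by
    intro k
    rw [eval_nodal, eval_nodal, ← mul_prod_erase _ _ (mem_univ j),
      mul_div_cancel_left₀ _ (sub_ne_zero.mpr (hab j k).symm)]
  have hdeg : E.degree < #(univ : Finset ι) := by
    rw [degree_nodal]
    exact_mod_cast card_erase_lt_of_mem (mem_univ j)
  have hPb : ∀ i, (nodal univ b).eval (a i) ≠ 0 := fun i =>
    eval_nodal_not_at_node fun k _ => hab i k
  calc ∑ k, cauchy a b i k * _
      = (∑ k, nodalWeight univ b k * (a i - b k)⁻¹ * E.eval (b k)) *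
          ((nodal univ b).eval (a j) * nodalWeight univ a j) := by
        rw [sum_mul]
        refine sum_congr rfl fun k _ => ?_
        rw [cauchy, of_apply, of_apply, ← hE]
        ring
    _ = E.eval (a i) / (nodal univ b).eval (a i) *
          ((nodal univ b).eval (a j) * nodalWeight univ a j) := by
        rw [eval_eq_eval_nodal_mul_sum_nodalWeight hb.injOn hdeg fun k _ => hab i k,
          mul_div_cancel_left₀ _ (hPb i)]
    _ = (1 : Matrix ι ι K) i j := by
        obtain rfl | hij := eq_or_ne i j
        · have hEi : E.eval (a i) ≠ 0 :=
            eval_nodal_not_at_node fun m hm => ha.ne (ne_of_mem_erase hm).symm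
          rw [one_apply_eq, nodalWeight_eq_eval_nodal_erase_inv, ← hE_def]
          field_simp [hPb i]
        · rw [one_apply_ne hij, eval_nodal_at_node (mem_erase.mpr ⟨hij, mem_univ i⟩), zero_div,
            zero_mul]

end Matrix

section Products

variable {R : Type*}

theorem factorial_mul_prod_fin_add_succ [CommSemiring R] (x n : ℕ) :
    (x ! : R) * ∏ m : Fin n, ((x : R) + m + 1) = (x + n)! := by
  rw [← Nat.factorial_mul_ascFactorial, Nat.ascFactorial_eq_prod_range,
    Fin.prod_univ_eq_prod_range (fun m => (x : R) + m + 1)]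
  push_cast
  exact congrArg _ (prod_congr rfl fun m _ => add_right_comm _ _ _)

theorem prod_fin_erase_eq_prod_range_mul {M : Type*} [CommMonoid M] (f : ℕ → M) {n : ℕ}
    (j : Fin n) :
    ∏ m ∈ univ.erase j, f m = (∏ m ∈ range j, f m) * ∏ m ∈ range (n - 1 - j), f (j + 1 + m) := by
  have hsplit : (univ.erase j).map Fin.valEmbedding = range j ∪ Ico (j + 1) n := by
    ext m
    simp only [map_erase, Fin.map_valEmbedding_univ, Fin.valEmbedding_apply, mem_erase, mem_Iio,
      mem_union, mem_range, mem_Ico]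
    omega
  have hdisj : Disjoint (range j) (Ico (j + 1) n) := by
    rw [disjoint_left]
    intro m
    simp only [mem_range, mem_Ico]
    omega
  calc ∏ m ∈ univ.erase j, f m = ∏ m ∈ (univ.erase j).map Fin.valEmbedding, f m :=
        (prod_map (univ.erase j) Fin.valEmbedding f).symm
    _ = _ := by
        rw [hsplit, prod_union hdisj, prod_Ico_eq_prod_range, Nat.sub_sub, add_comm 1]

theorem prod_erase_natCast_sub [CommRing R] (p : ℕ) (j : Fin (p + 1)) :
    ∏ m ∈ univ.erase j, ((m : R) - j) = (-1) ^ (j : ℕ) * j ! * (p - j)! := by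
  have hfact (n : ℕ) : ∏ m ∈ range n, ((m : R) + 1) = n ! := by
    rw [← prod_range_add_one_eq_factorial]; push_cast; rfl
  have hbelow : ∏ m ∈ range j, ((m : R) - j) = (-1) ^ (j : ℕ) * j ! := by
    have hneg := prod_neg (s := range (j : ℕ)) fun m : ℕ => (m : R) + 1
    rw [card_range] at hneg
    rw [← prod_range_reflect, ← hfact, ← hneg]
    refine prod_congr rfl fun m hm => ?_
    rw [mem_range] at hm
    rw [Nat.cast_sub (by omega), Nat.cast_sub (by omega)]
    push_cast; ring
  have habove : ∏ m ∈ range (p - j), (((j + 1 + m : ℕ) : R) - j) = (p - j)! := by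
    rw [← hfact]
    refine prod_congr rfl fun m _ => ?_
    push_cast; ring
  rw [prod_fin_erase_eq_prod_range_mul (fun m : ℕ => (m : R) - j), add_tsub_cancel_right,
    hbelow, habove]

end Products

section HilbertNodes

variable {K : Type*} [Field K]

theorem eval_nodal_natCast_neg (n : ℕ) (x : K) :
    (nodal univ fun i : Fin n => (i : K)).eval (-(x + 1)) =
      (-1) ^ n * ∏ m : Fin n, (x + m + 1) := by
  have hneg := prod_neg (s := univ) fun m : Fin n => x + m + 1
  rw [card_univ, Fintype.card_fin] at hneg
  rw [eval_nodal, ← hneg]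
  exact prod_congr rfl fun m _ => by ring

theorem eval_nodal_neg_natCast_succ (n : ℕ) (x : K) :
    (nodal univ fun k : Fin n => -((k : K) + 1)).eval x = ∏ m : Fin n, (x + m + 1) := by
  rw [eval_nodal]
  exact prod_congr rfl fun m _ => by ring

theorem nodalWeight_natCast (p : ℕ) (j : Fin (p + 1)) :
    nodalWeight univ (fun i : Fin (p + 1) => (i : K)) j =
      ((-1 : K) ^ p * ((-1) ^ (j : ℕ) * j ! * (p - j)!))⁻¹ := by
  have hneg := prod_neg (s := univ.erase j) fun m : Fin (p + 1) => (m : K) - j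
  rw [card_erase_of_mem (mem_univ j), card_univ, Fintype.card_fin, Nat.add_sub_cancel] at hneg
  rw [nodalWeight, prod_inv_distrib, ← prod_erase_natCast_sub, ← hneg]
  exact congrArg _ (prod_congr rfl fun m _ => by ring)

theorem nodalWeight_neg_natCast_succ (p : ℕ) (k : Fin (p + 1)) :
    nodalWeight univ (fun k : Fin (p + 1) => -((k : K) + 1)) k =
      ((-1 : K) ^ (k : ℕ) * k ! * (p - k)!)⁻¹ := by
  rw [nodalWeight, prod_inv_distrib, ← prod_erase_natCast_sub]
  exact congrArg _ (prod_congr rfl fun m _ => by ring)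

end HilbertNodes

namespace Matrix

variable {K : Type*} [Field K]

def hilbert (n : ℕ) : Matrix (Fin n) (Fin n) K :=
  of fun i j => ((i : K) + j + 1)⁻¹

theorem hilbert_eq_cauchy (n : ℕ) :
    hilbert n = cauchy (fun i : Fin n => (i : K)) (fun k => -((k : K) + 1)) := by
  ext i k
  rw [hilbert, cauchy, of_apply, of_apply, sub_neg_eq_add, add_assoc]

theorem inv_hilbert_apply [CharZero K] (p : ℕ) (i j : Fin (p + 1)) :
    (hilbert (p + 1) : Matrix _ _ K)⁻¹ i j = (-1) ^ ((i : ℕ) + j) * ((p + i + 1)! * (p + j + 1)!) /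
      ((i + j + 1) * ((i ! * j !) ^ 2 * ((p - i)! * (p - j)!))) := by
  have hsucc (x y : Fin (p + 1)) : (x : K) + y + 1 ≠ 0 := by
    exact_mod_cast Nat.succ_ne_zero ((x : ℕ) + y)
  have ha : (fun i : Fin (p + 1) => (i : K)).Injective := fun _ _ h =>
    Fin.ext (Nat.cast_injective h)
  have hb : (fun k : Fin (p + 1) => -((k : K) + 1)).Injective := fun _ _ h =>
    Fin.ext (by simpa using h)
  have hab (x y : Fin (p + 1)) : (x : K) ≠ -((y : K) + 1) := fun h =>
    hsucc x y (by rw [h]; ring)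
  have hfact (x : ℕ) : ((p + x + 1)! : K) = x ! * ∏ m : Fin (p + 1), ((x : K) + m + 1) := by
    rw [factorial_mul_prod_fin_add_succ, add_comm p, add_assoc]
  -- `(-1) ^ n` is its own inverse, which turns the sign bookkeeping into a field identity.
  have hsign : (-1 : K) ^ ((i : ℕ) + j) = ((-1) ^ ((i : ℕ) + j))⁻¹ := by
    rw [← inv_pow, inv_neg_one]
  rw [hilbert_eq_cauchy, inv_cauchy ha hb hab, of_apply, eval_nodal_natCast_neg,
    eval_nodal_neg_natCast_succ, nodalWeight_natCast, nodalWeight_neg_natCast_succ, hfact, hfact,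
    hsign, show -((i : K) + 1) - j = -((i : K) + j + 1) by ring]
  have hij := hsucc i j
  field_simp
  ring

end Matrix

theorem Nat.factorial_eq_succ_mul_choose_mul_choose {i j p : ℕ} (hj : j ≤ p) :
    (p + i + 1)! =
      (i + j + 1) * (i + j).choose i * (p + i + 1).choose (p - j) * i ! * j ! * (p - j)! := by
  have hsub : p + i + 1 - (p - j) = i + j + 1 := by omega
  rw [← Nat.choose_mul_factorial_mul_factorial (by omega : p - j ≤ p + i + 1), hsub,
    Nat.factorial_succ, ← Nat.add_choose_mul_factorial_mul_factorial i j, ← Nat.choose_symm_add]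
  ring

/-- The inverse of the (p+1)-dimensional Hilbert matrix `H` with entries
`H i j = 1/(i+j-1)` (1-based indexing) has entries
`(H⁻¹) i j = (-1)^(i+j) (i+j-1) C(p+i, p+1-j) C(p+j, p+1-i) C(i+j-2, i-1)^2`.
Here indices `i j : Fin (p+1)` correspond to the 1-based indices `i+1, j+1`. -/
theorem hilbert_matrix_inverse_entries (p : ℕ)
    (H : Matrix (Fin (p + 1)) (Fin (p + 1)) ℝ)
    (hH : ∀ i j : Fin (p + 1), H i j = 1 / ((i : ℕ) + (j : ℕ) + 1 : ℝ)) :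
    ∀ i j : Fin (p + 1),
      H⁻¹ i j = (-1 : ℝ) ^ ((i : ℕ) + (j : ℕ)) * ((i : ℕ) + (j : ℕ) + 1 : ℝ) *
        (Nat.choose (p + (i : ℕ) + 1) (p - (j : ℕ)) : ℝ) *
        (Nat.choose (p + (j : ℕ) + 1) (p - (i : ℕ)) : ℝ) *
        (Nat.choose ((i : ℕ) + (j : ℕ)) (i : ℕ) : ℝ) ^ 2 := by
  intro i j
  have hH' : H = Matrix.hilbert (p + 1) := by
    ext i j
    rw [hH, Matrix.hilbert, Matrix.of_apply, one_div]
  have hsymm : ((j : ℕ) + i).choose j = ((i : ℕ) + j).choose i := by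
    rw [Nat.choose_symm_add, add_comm]
  rw [hH', Matrix.inv_hilbert_apply,
    Nat.factorial_eq_succ_mul_choose_mul_choose (Nat.le_of_lt_succ j.2),
    Nat.factorial_eq_succ_mul_choose_mul_choose (Nat.le_of_lt_succ i.2), hsymm]
  have hden : ((i : ℝ) + j + 1) * ((i ! : ℝ) * j !) ^ 2 * ((p - i)! * (p - j)!) ≠ 0 := by
    positivity
  field_simp
  push_cast
  ring
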